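/- The clobber position oxoxoxoxo (alternating path of length 9 with o at both ends) is equivalent to the clobber position ooxo. -/

import Mathlib

namespace SetTheory

universe u

/-- Conway's pre-games, as in the removed `SetTheory.PGame` of Mathlib (Dec 2024). -/
inductive PGame : Type (u + 1)
  | mk : ∀ α β : Type u, (α → PGame) → (β → PGame) → PGame

namespace PGame

/-- The pair (`x ≤ y`, `x ⧏ y`), defined by simultaneous recursion as in old Mathlib:
`x ≤ y ↔ (∀ i, xL i ⧏ y) ∧ ∀ j, x ⧏ yR j` and `x ⧏ y ↔ (∃ i, x ≤ yL i) ∨ ∃ j, xR j ≤ y`. -/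
noncomputable def leLF (x : PGame.{u}) : PGame.{u} → Prop × Prop :=
  PGame.rec (motive := fun _ => PGame.{u} → Prop × Prop)
    (fun xl xr xL xR IHxl IHxr y =>
      PGame.rec (motive := fun _ => Prop × Prop)
        (fun yl yr yL yR IHyl IHyr =>
          ((∀ i, (IHxl i (mk yl yr yL yR)).2) ∧ ∀ j, (IHyr j).2,
            (∃ i, (IHyl i).1) ∨ ∃ j, (IHxr j (mk yl yr yL yR)).1))
        y)
    x

noncomputable instance : LE PGame.{u} := ⟨fun x y => (leLF x y).1⟩

def Equiv (x y : PGame.{u}) : Prop := x ≤ y ∧ y ≤ x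

instance : Zero PGame.{u} := ⟨⟨PEmpty, PEmpty, PEmpty.elim, PEmpty.elim⟩⟩

def ofLists (L R : List PGame.{u}) : PGame.{u} :=
  mk (ULift (Fin L.length)) (ULift (Fin R.length)) (fun i => L.get i.down) fun j => R.get j.down

instance : HasEquiv PGame.{u} := ⟨Equiv⟩

end PGame

end SetTheory

open SetTheory PGame

inductive Cell | x | o | e
deriving DecidableEq

abbrev Pos := List Cell

/-- All positions reachable by one move of the player with stones `me`
clobbering an adjacent stone of the opponent `opp`. -/
def movesAux (me opp : Cell) : Pos → List Pos
  | a :: b :: rest =>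
      (if a = me ∧ b = opp then [Cell.e :: me :: rest] else []) ++
      (if a = opp ∧ b = me then [me :: Cell.e :: rest] else []) ++
      (movesAux me opp (b :: rest)).map (a :: ·)
  | _ => []

def leftMoves (p : Pos) : List Pos := movesAux Cell.x Cell.o p
def rightMoves (p : Pos) : List Pos := movesAux Cell.o Cell.x p

def stones (p : Pos) : Nat := p.countP (· != Cell.e)

/-- Game value of a clobber position, via fuel recursion (each move removes one stone). -/
def valueFuel : Nat → Pos → PGame
  | 0, _ => 0
  | n+1, p => PGame.ofLists ((leftMoves p).map (valueFuel n)) ((rightMoves p).map (valueFuel n))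

def value (p : Pos) : PGame := valueFuel (stones p) p

/-! Every move removes exactly one stone, so the fuel-based `value` satisfies Conway's recursive
characterisation of `≤` and `⧏` through the players' move lists. A Boolean transcription of that
recursion, with the total number of stones as fuel, is then evaluated by the kernel: an exhaustive
search of both game trees settles the two inequalities. -/

namespace SetTheory.PGame

def LeftMoves : PGame.{u} → Type u
  | mk l _ _ _ => l

def RightMoves : PGame.{u} → Type u
  | mk _ r _ _ => r

def moveLeft : ∀ g : PGame.{u}, LeftMoves g → PGame.{u}
  | mk _ _ L _ => L

def moveRight : ∀ g : PGame.{u}, RightMoves g → PGame.{u}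
  | mk _ _ _ R => R

def LF (x y : PGame.{u}) : Prop := (leLF x y).2

infixl:50 " ⧏ " => PGame.LF

instance isEmpty_leftMoves_zero : IsEmpty (LeftMoves (0 : PGame.{u})) :=
  inferInstanceAs (IsEmpty PEmpty)

instance isEmpty_rightMoves_zero : IsEmpty (RightMoves (0 : PGame.{u})) :=
  inferInstanceAs (IsEmpty PEmpty)

theorem le_iff_forall_lf {x y : PGame.{u}} :
    x ≤ y ↔ (∀ i, x.moveLeft i ⧏ y) ∧ ∀ j, x ⧏ y.moveRight j := by
  cases x; cases y; exact Iff.rfl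

theorem lf_iff_exists_le {x y : PGame.{u}} :
    x ⧏ y ↔ (∃ i, x ≤ y.moveLeft i) ∨ ∃ j, x.moveRight j ≤ y := by
  cases x; cases y; exact Iff.rfl

section ofLists

variable {L R : List PGame.{u}} {P : PGame.{u} → Prop}

theorem forall_moveLeft_ofLists : (∀ i, P ((ofLists L R).moveLeft i)) ↔ ∀ g ∈ L, P g :=
  ULift.forall.trans List.forall_mem_iff_get.symm

theorem forall_moveRight_ofLists : (∀ j, P ((ofLists L R).moveRight j)) ↔ ∀ g ∈ R, P g :=
  ULift.forall.trans List.forall_mem_iff_get.symm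

end ofLists

end SetTheory.PGame

theorem stones_add_one_of_mem_movesAux {me opp : Cell} (hme : me ≠ Cell.e) (hopp : opp ≠ Cell.e) :
    ∀ {p q : Pos}, q ∈ movesAux me opp p → stones q + 1 = stones p
  | a :: b :: rest, q, hq => by
    simp only [movesAux, List.mem_append, List.mem_ite_nil_right, List.mem_singleton,
      List.mem_map] at hq
    rcases hq with (⟨⟨rfl, rfl⟩, rfl⟩ | ⟨⟨rfl, rfl⟩, rfl⟩) | ⟨q', hq', rfl⟩
    · simp [stones, hme, hopp]
    · simp [stones, hme, hopp]
    · have := stones_add_one_of_mem_movesAux hme hopp hq'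
      simp only [stones, List.countP_cons] at this ⊢
      omega

theorem stones_add_one_of_mem_leftMoves {p q : Pos} (hq : q ∈ leftMoves p) :
    stones q + 1 = stones p :=
  stones_add_one_of_mem_movesAux (by decide) (by decide) hq

theorem stones_add_one_of_mem_rightMoves {p q : Pos} (hq : q ∈ rightMoves p) :
    stones q + 1 = stones p :=
  stones_add_one_of_mem_movesAux (by decide) (by decide) hq

theorem leftMoves_eq_nil_of_stones_eq_zero {p : Pos} (h : stones p = 0) : leftMoves p = [] :=
  List.eq_nil_iff_forall_not_mem.2 fun q hq => by
    have := stones_add_one_of_mem_leftMoves hq; omega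

theorem rightMoves_eq_nil_of_stones_eq_zero {p : Pos} (h : stones p = 0) : rightMoves p = [] :=
  List.eq_nil_iff_forall_not_mem.2 fun q hq => by
    have := stones_add_one_of_mem_rightMoves hq; omega

theorem map_valueFuel_eq_map_value {n : ℕ} {l : List Pos} (h : ∀ q ∈ l, stones q = n) :
    l.map (valueFuel.{u} n) = l.map value :=
  List.map_congr_left fun q hq => by rw [value, h q hq]

theorem value_eq_ofLists {p : Pos} (h : stones p ≠ 0) :
    value.{u} p = ofLists ((leftMoves p).map value) ((rightMoves p).map value) := by
  obtain ⟨n, hn⟩ := Nat.exists_eq_succ_of_ne_zero h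
  rw [value, hn, valueFuel,
    map_valueFuel_eq_map_value fun q hq => by have := stones_add_one_of_mem_leftMoves hq; omega,
    map_valueFuel_eq_map_value fun q hq => by have := stones_add_one_of_mem_rightMoves hq; omega]

theorem value_eq_zero {p : Pos} (h : stones p = 0) : value.{u} p = 0 := by
  rw [value, h, valueFuel]

theorem forall_moveLeft_value {p : Pos} {P : PGame.{u} → Prop} :
    (∀ i, P ((value p).moveLeft i)) ↔ ∀ q ∈ leftMoves p, P (value q) := by
  by_cases h : stones p = 0
  · rw [value_eq_zero h, leftMoves_eq_nil_of_stones_eq_zero h]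
    exact ⟨fun _ _ => False.elim ∘ List.not_mem_nil, fun _ => isEmptyElim⟩
  · rw [value_eq_ofLists h, forall_moveLeft_ofLists, List.forall_mem_map]

theorem forall_moveRight_value {p : Pos} {P : PGame.{u} → Prop} :
    (∀ j, P ((value p).moveRight j)) ↔ ∀ q ∈ rightMoves p, P (value q) := by
  by_cases h : stones p = 0
  · rw [value_eq_zero h, rightMoves_eq_nil_of_stones_eq_zero h]
    exact ⟨fun _ _ => False.elim ∘ List.not_mem_nil, fun _ => isEmptyElim⟩
  · rw [value_eq_ofLists h, forall_moveRight_ofLists, List.forall_mem_map]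

theorem value_le_iff {x y : Pos} :
    value.{u} x ≤ value y ↔
      (∀ x' ∈ leftMoves x, value.{u} x' ⧏ value y) ∧ ∀ y' ∈ rightMoves y, value.{u} x ⧏ value y' := by
  rw [le_iff_forall_lf]
  exact and_congr (forall_moveLeft_value (P := (· ⧏ value y))) forall_moveRight_value

theorem exists_moveLeft_value {p : Pos} {P : PGame.{u} → Prop} :
    (∃ i, P ((value p).moveLeft i)) ↔ ∃ q ∈ leftMoves p, P (value q) := by
  simpa using (forall_moveLeft_value (P := fun g => ¬ P g)).not

theorem exists_moveRight_value {p : Pos} {P : PGame.{u} → Prop} :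
    (∃ j, P ((value p).moveRight j)) ↔ ∃ q ∈ rightMoves p, P (value q) := by
  simpa using (forall_moveRight_value (P := fun g => ¬ P g)).not

theorem value_lf_iff {x y : Pos} :
    value.{u} x ⧏ value y ↔
      (∃ y' ∈ leftMoves y, value.{u} x ≤ value y') ∨ ∃ x' ∈ rightMoves x, value.{u} x' ≤ value y := by
  rw [lf_iff_exists_le]
  exact or_congr exists_moveLeft_value (exists_moveRight_value (P := (· ≤ value y)))

mutual

/-- Structural recursion on the fuel `k` (rather than well-founded recursion on the number of
stones) is what lets the kernel evaluate these functions under `decide`. -/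
def leBool : ℕ → Pos → Pos → Bool
  | 0, _, _ => true
  | k + 1, x, y =>
    (leftMoves x).all (fun x' => lfBool k x' y) && (rightMoves y).all (fun y' => lfBool k x y')

def lfBool : ℕ → Pos → Pos → Bool
  | 0, _, _ => false
  | k + 1, x, y =>
    (leftMoves y).any (fun y' => leBool k x y') || (rightMoves x).any (fun x' => leBool k x' y)

end

theorem leBool_iff_and_lfBool_iff (k : ℕ) : ∀ x y : Pos, stones x + stones y ≤ k →
    (leBool k x y = true ↔ value.{u} x ≤ value y) ∧ (lfBool k x y = true ↔ value.{u} x ⧏ value y) := by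
  induction k with
  | zero =>
    intro x y h
    obtain ⟨hx, hy⟩ : stones x = 0 ∧ stones y = 0 := by omega
    rw [value_le_iff, value_lf_iff, leftMoves_eq_nil_of_stones_eq_zero hx,
      leftMoves_eq_nil_of_stones_eq_zero hy, rightMoves_eq_nil_of_stones_eq_zero hx,
      rightMoves_eq_nil_of_stones_eq_zero hy]
    simp [leBool, lfBool]
  | succ k ih =>
    intro x y h
    constructor
    · rw [value_le_iff]
      simp only [leBool, Bool.and_eq_true, List.all_eq_true]
      exact and_congr
        (forall₂_congr fun x' hx' => (ih _ _ (by have := stones_add_one_of_mem_leftMoves hx'; omega)).2)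
        (forall₂_congr fun y' hy' => (ih _ _ (by have := stones_add_one_of_mem_rightMoves hy'; omega)).2)
    · rw [value_lf_iff]
      simp only [lfBool, Bool.or_eq_true, List.any_eq_true]
      exact or_congr
        (exists_congr fun y' => and_congr_right fun hy' =>
          (ih _ _ (by have := stones_add_one_of_mem_leftMoves hy'; omega)).1)
        (exists_congr fun x' => and_congr_right fun hx' =>
          (ih _ _ (by have := stones_add_one_of_mem_rightMoves hx'; omega)).1)

theorem value_le_of_leBool {x y : Pos} (h : leBool (stones x + stones y) x y = true) :
    value.{u} x ≤ value y :=
  (leBool_iff_and_lfBool_iff _ x y le_rfl).1.1 h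

/-- The clobber position `oxoxoxoxo` is equivalent to `ooxo`. -/
theorem oxoxoxoxo_equiv_ooxo :
    value [Cell.o, Cell.x, Cell.o, Cell.x, Cell.o, Cell.x, Cell.o, Cell.x, Cell.o] ≈
      value [Cell.o, Cell.o, Cell.x, Cell.o] :=
  ⟨value_le_of_leBool (by decide), value_le_of_leBool (by decide)⟩
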